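/- arXiv:2210.13145 — 2 statements merged into one kernel-verified Lean document; each statement's English description precedes it below -/
import Mathlib

section
/- Let P : [0, ∞) → [0, ∞) be differentiable on (0, ∞) with P'(z) ≥ 0 for all z > 0. Then for all 3×3 real matrices U and V (with P(|W|)W interpreted as 0 when W = 0), one has (P(|U|)U − P(|V|)V) : (U − V) ≥ (∫₀¹ P(|sU + (1−s)V|) ds) · |U − V|². -/
/-- Frobenius inner product `A : B = Σ_{i,j} A_{ij} B_{ij}` of `3×3` real matrices. -/
noncomputable def fip (A B : Matrix (Fin 3) (Fin 3) ℝ) : ℝ := ∑ i, ∑ j, A i j * B i j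

/-- Frobenius norm `|A| = (A : A)^{1/2}` of a `3×3` real matrix. -/
noncomputable def fnorm (A : Matrix (Fin 3) (Fin 3) ℝ) : ℝ := Real.sqrt (fip A A)

open MeasureTheory Set Real
open scoped RealInnerProductSpace

theorem key_ips {E : Type*} [NormedAddCommGroup E] [InnerProductSpace ℝ E]
    (P : ℝ → ℝ)
    (hP0 : ∀ z : ℝ, 0 ≤ z → 0 ≤ P z)
    (hPdiff : ∀ z : ℝ, 0 < z → DifferentiableAt ℝ P z)
    (hP' : ∀ z : ℝ, 0 < z → 0 ≤ deriv P z)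
    (u v : E) :
    (∫ s in (0:ℝ)..1, P ‖s • u + (1 - s) • v‖) * ‖u - v‖ ^ 2 ≤
      ⟪P ‖u‖ • u - P ‖v‖ • v, u - v⟫ := by
  by_cases huv : u = v
  · simp [huv]
  set m := u - v with hm
  have hm0 : m ≠ 0 := sub_ne_zero.mpr huv
  set c : ℝ := ‖m‖ with hc
  have hcpos : 0 < c := norm_pos_iff.mpr hm0
  set w : ℝ → E := fun s => v + s • m with hwdef
  have hw : ∀ s : ℝ, s • u + (1 - s) • v = w s := by
    intro s; simp only [hwdef, hm]; module
  set n : ℝ → ℝ := fun s => ‖w s‖ with hndef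
  set φ : ℝ → ℝ := fun s => ⟪w s, m⟫ with hφdef
  set f : ℝ → ℝ := fun s => P (n s) * φ s with hfdef
  set g : ℝ → ℝ := fun s => P (n s) * c ^ 2 with hgdef
  have hn0 : ∀ s, 0 ≤ n s := fun s => norm_nonneg _
  have hφ : ∀ s : ℝ, φ s = ⟪v, m⟫ + s * c ^ 2 := by
    intro s
    simp only [hφdef, hwdef, inner_add_left, real_inner_smul_left]
    rw [real_inner_self_eq_norm_sq]
  have hφderiv : ∀ s : ℝ, HasDerivAt φ (c ^ 2) s := by
    intro s
    have h : φ = fun s : ℝ => ⟪v, m⟫ + s * c ^ 2 := funext hφ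
    rw [h]
    simpa using (hasDerivAt_mul_const (c ^ 2) (x := s)).const_add (⟪v, m⟫)
  have hqex : (fun t : ℝ => (⟪w t, w t⟫ : ℝ)) =
      fun t : ℝ => ‖v‖ ^ 2 + 2 * (⟪v, m⟫ * t) + c ^ 2 * t ^ 2 := by
    funext t
    simp only [hwdef]
    rw [real_inner_add_add_self]
    simp only [real_inner_smul_left, real_inner_smul_right, real_inner_self_eq_norm_sq,
      norm_smul, Real.norm_eq_abs, mul_pow, sq_abs, ← hc]
    ring
  have hqderiv : ∀ s : ℝ, HasDerivAt (fun t : ℝ => (⟪w t, w t⟫ : ℝ)) (2 * φ s) s := by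
    intro s
    rw [hqex]
    have h2 : HasDerivAt (fun t : ℝ => t ^ 2) (2 * s) s := by simpa using hasDerivAt_pow 2 s
    have h1 : HasDerivAt (fun t : ℝ => ⟪v, m⟫ * t) ⟪v, m⟫ s := by
      simpa using (hasDerivAt_id s).const_mul (⟪v, m⟫ : ℝ)
    have h := ((h1.const_mul (2:ℝ)).const_add (‖v‖ ^ 2)).add (h2.const_mul (c ^ 2))
    refine h.congr_deriv ?_
    rw [hφ s]; ring
  have hnsq : ∀ s, n s = √(⟪w s, w s⟫ : ℝ) := fun s => norm_eq_sqrt_real_inner _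
  have hnderiv : ∀ s : ℝ, w s ≠ 0 → HasDerivAt n (φ s / n s) s := by
    intro s hs
    have hq0 : (⟪w s, w s⟫ : ℝ) ≠ 0 := by
      simpa [inner_self_eq_zero] using hs
    have h := (hqderiv s).sqrt hq0
    have hne : (fun t : ℝ => √(⟪w t, w t⟫ : ℝ)) = n := (funext hnsq).symm
    rw [hne] at h
    convert h using 1
    rw [hnsq s, mul_div_mul_left _ _ (two_ne_zero)]
  set g' : ℝ → ℝ := fun s => deriv P (n s) * (φ s / n s) * φ s + P (n s) * c ^ 2 with hg'def
  have hfderiv : ∀ s : ℝ, w s ≠ 0 → HasDerivAt f (g' s) s := by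
    intro s hs
    have hnpos : 0 < n s := norm_pos_iff.mpr hs
    have hP := (hPdiff (n s) hnpos).hasDerivAt
    have h1 : HasDerivAt (fun t => P (n t)) (deriv P (n s) * (φ s / n s)) s :=
      hP.comp s (hnderiv s hs)
    exact h1.mul (hφderiv s)
  have hgg' : ∀ s : ℝ, w s ≠ 0 → g s ≤ g' s := by
    intro s hs
    have hnpos : 0 < n s := norm_pos_iff.mpr hs
    have h1 : deriv P (n s) * (φ s / n s) * φ s = deriv P (n s) * φ s ^ 2 / n s := by ring
    have h2 : 0 ≤ deriv P (n s) * (φ s / n s) * φ s := by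
      rw [h1]
      exact div_nonneg (mul_nonneg (hP' (n s) hnpos) (sq_nonneg _)) hnpos.le
    simp only [hg'def, hgdef]
    linarith
  have hmono : MonotoneOn P (Ioi (0:ℝ)) := by
    apply monotoneOn_of_deriv_nonneg (convex_Ioi 0)
    · exact fun z hz => (hPdiff z hz).continuousAt.continuousWithinAt
    · intro z hz
      rw [interior_Ioi] at hz
      exact (hPdiff z hz).differentiableWithinAt
    · intro z hz
      rw [interior_Ioi] at hz
      exact hP' z hz
  have hwcont : Continuous w := continuous_const.add (continuous_id.smul continuous_const)
  have hncont : Continuous n := hwcont.norm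
  have huniq : ∀ s t : ℝ, w s = 0 → w t = 0 → s = t := by
    intro s t hs ht
    have h : s • m = t • m := by
      have h0 : w s = w t := hs.trans ht.symm
      simpa only [hwdef, add_right_inj] using h0
    have h2 : (s - t) • m = 0 := by rw [sub_smul, h, sub_self]
    rcases smul_eq_zero.mp h2 with h3 | h3
    · linarith [sub_eq_zero.mp h3]
    · exact absurd h3 hm0
  have hgcontAt : ∀ s : ℝ, w s ≠ 0 → ContinuousAt (fun t => P (n t)) s := by
    intro s hs
    have hnpos : 0 < n s := norm_pos_iff.mpr hs
    exact ((hPdiff (n s) hnpos).continuousAt).comp hncont.continuousAt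
  have hfcont : Continuous f := by
    rw [continuous_iff_continuousAt]
    intro s₀
    by_cases hs₀ : w s₀ ≠ 0
    · exact (hfderiv s₀ hs₀).continuousAt
    push_neg at hs₀
    have hφ0 : φ s₀ = 0 := by simp [hφdef, hs₀]
    have hf0 : f s₀ = 0 := by simp [hfdef, hφ0]
    have hwshift : ∀ s : ℝ, w s = (s - s₀) • m := by
      intro s
      have h : w s = w s₀ + (s - s₀) • m := by simp only [hwdef]; module
      rw [h, hs₀, zero_add]
    have hns : ∀ s, n s = |s - s₀| * c := by
      intro s
      simp [hndef, hwshift s, norm_smul, Real.norm_eq_abs, hc]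
    have hvm : (⟪v, m⟫ : ℝ) = -(s₀ * c ^ 2) := by
      have h := hφ s₀; rw [hφ0] at h; linarith
    have hφs : ∀ s, φ s = (s - s₀) * c ^ 2 := by
      intro s; rw [hφ s, hvm]; ring
    set B : ℝ := max (P 0) (P c) with hBdef
    have hB0 : 0 ≤ B := le_trans (hP0 0 le_rfl) (le_max_left _ _)
    have hPB : ∀ s : ℝ, |s - s₀| ≤ 1 → P (n s) ≤ B := by
      intro s hs1
      by_cases hss : s = s₀
      · rw [hss]
        have : n s₀ = 0 := by rw [hns]; simp
        rw [this]
        exact le_max_left _ _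
      · have habs : 0 < |s - s₀| := abs_pos.mpr (sub_ne_zero.mpr hss)
        have hnpos : 0 < n s := by rw [hns]; positivity
        have hle : n s ≤ c := by
          rw [hns]
          calc |s - s₀| * c ≤ 1 * c := by nlinarith
          _ = c := one_mul c
        calc P (n s) ≤ P c := hmono (mem_Ioi.mpr hnpos) (mem_Ioi.mpr hcpos) hle
        _ ≤ B := le_max_right _ _
    have hf0' : ContinuousAt f s₀ := by
      rw [ContinuousAt, hf0]
      apply squeeze_zero_norm' (a := fun s => B * c ^ 2 * |s - s₀|)
      · have hev : ∀ᶠ s in nhds s₀, |s - s₀| ≤ 1 := by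
          filter_upwards [Metric.closedBall_mem_nhds s₀ (by norm_num : (0:ℝ) < 1)] with s hs
          simpa [Real.dist_eq] using hs
        filter_upwards [hev] with s hs1
        calc ‖f s‖ = P (n s) * |φ s| := by
              rw [Real.norm_eq_abs, hfdef, abs_mul, abs_of_nonneg (hP0 _ (hn0 s))]
        _ ≤ B * |φ s| := mul_le_mul_of_nonneg_right (hPB s hs1) (abs_nonneg _)
        _ = B * c ^ 2 * |s - s₀| := by
              rw [hφs s, abs_mul, abs_of_nonneg (sq_nonneg c)]; ring
      · have h1 : Filter.Tendsto (fun s : ℝ => |s - s₀|) (nhds s₀) (nhds 0) := by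
          have hcount : Continuous (fun s : ℝ => |s - s₀|) := by
            apply continuous_abs.comp
            exact continuous_id.sub continuous_const
          have := hcount.tendsto s₀
          simpa using this
        have := h1.const_mul (B * c ^ 2)
        simpa using this
    exact hf0'
  -- integrability of g on [0,1]
  have hgbnd : ∃ C : ℝ, ∀ s ∈ Icc (0:ℝ) 1, ‖g s‖ ≤ C := by
    refine ⟨max (P 0) (P (‖v‖ + c + 1)) * c ^ 2, fun s hs => ?_⟩
    have hnb : n s ≤ ‖v‖ + c := by
      calc n s ≤ ‖v‖ + ‖s • m‖ := norm_add_le _ _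
      _ = ‖v‖ + |s| * c := by rw [norm_smul, Real.norm_eq_abs]
      _ ≤ ‖v‖ + 1 * c := by
            have : |s| ≤ 1 := abs_le.mpr ⟨by linarith [hs.1], hs.2⟩
            nlinarith
      _ = ‖v‖ + c := by ring
    have hPle : P (n s) ≤ max (P 0) (P (‖v‖ + c + 1)) := by
      by_cases hn : n s = 0
      · rw [hn]; exact le_max_left _ _
      · have hnpos : 0 < n s := lt_of_le_of_ne (hn0 s) (Ne.symm hn)
        have hvp : (0:ℝ) < ‖v‖ + c + 1 := by positivity
        calc P (n s) ≤ P (‖v‖ + c + 1) :=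
              hmono (mem_Ioi.mpr hnpos) (mem_Ioi.mpr hvp) (by linarith)
        _ ≤ _ := le_max_right _ _
    have hg0 : 0 ≤ g s := mul_nonneg (hP0 _ (hn0 s)) (sq_nonneg c)
    rw [Real.norm_eq_abs, abs_of_nonneg hg0]
    exact mul_le_mul_of_nonneg_right hPle (sq_nonneg c)
  obtain ⟨C, hC⟩ := hgbnd
  have hgint : IntegrableOn g (Icc (0:ℝ) 1) volume := by
    by_cases hex : ∃ s₀ : ℝ, w s₀ = 0
    · obtain ⟨s₀, hs₀⟩ := hex
      have hms : MeasurableSet (Icc (0:ℝ) 1 \ {s₀}) :=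
        measurableSet_Icc.diff (measurableSet_singleton _)
      have hcontOn : ContinuousOn g (Icc (0:ℝ) 1 \ {s₀}) := by
        intro s hs
        have hws : w s ≠ 0 := fun h => hs.2 (huniq s s₀ h hs₀)
        exact ((hgcontAt s hws).mul continuousAt_const).continuousWithinAt
      have h1 : IntegrableOn g (Icc (0:ℝ) 1 \ {s₀}) volume := by
        apply Integrable.mono' (g := fun _ => C)
        · exact (integrableOn_const_iff).mpr
            (Or.inr ((measure_mono diff_subset).trans_lt measure_Icc_lt_top))
        · exact hcontOn.aestronglyMeasurable hms
        · exact (ae_restrict_iff' hms).mpr (Filter.Eventually.of_forall fun s hs => hC s hs.1)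
      have h2 : IntegrableOn g ({s₀} : Set ℝ) volume := by
        rw [IntegrableOn, Measure.restrict_eq_zero.mpr (by simp)]
        exact integrable_zero_measure
      have h3 := h1.union h2
      exact h3.mono_set (by
        intro x hx
        by_cases hxx : x = s₀
        · exact Or.inr (by simp [hxx])
        · exact Or.inl ⟨hx, by simp [hxx]⟩)
    · push_neg at hex
      have : Continuous g := by
        rw [continuous_iff_continuousAt]
        exact fun s => (hgcontAt s (hex s)).mul continuousAt_const
      exact this.integrableOn_Icc
  have hkey : ∀ a b : ℝ, 0 ≤ a → a ≤ b → b ≤ 1 → (∀ s ∈ Ioo a b, w s ≠ 0) →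
      (∫ s in a..b, g s) ≤ f b - f a := by
    intro a b ha hab hb1 hne
    apply intervalIntegral.integral_le_sub_of_hasDeriv_right_of_le hab
      hfcont.continuousOn
      (fun x hx => (hfderiv x (hne x hx)).hasDerivWithinAt)
      (hgint.mono_set (Icc_subset_Icc ha hb1))
      (fun x hx => hgg' x (hne x hx))
  have hsplit : (∫ s in (0:ℝ)..1, g s) ≤ f 1 - f 0 := by
    by_cases hex : ∃ s₀ ∈ Ioo (0:ℝ) 1, w s₀ = 0
    · obtain ⟨s₀, hs₀mem, hs₀⟩ := hex
      have h1 := hkey 0 s₀ le_rfl hs₀mem.1.le hs₀mem.2.le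
        (fun s hs hws => absurd (huniq s s₀ hws hs₀) (ne_of_lt hs.2))
      have h2 := hkey s₀ 1 hs₀mem.1.le hs₀mem.2.le le_rfl
        (fun s hs hws => absurd (huniq s s₀ hws hs₀) (ne_of_gt hs.1))
      have hii1 : IntervalIntegrable g volume 0 s₀ :=
        (intervalIntegrable_iff_integrableOn_Icc_of_le hs₀mem.1.le).mpr
          (hgint.mono_set (Icc_subset_Icc le_rfl hs₀mem.2.le))
      have hii2 : IntervalIntegrable g volume s₀ 1 :=
        (intervalIntegrable_iff_integrableOn_Icc_of_le hs₀mem.2.le).mpr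
          (hgint.mono_set (Icc_subset_Icc hs₀mem.1.le le_rfl))
      have hadd := intervalIntegral.integral_add_adjacent_intervals hii1 hii2
      rw [← hadd]
      linarith
    · push_neg at hex
      exact hkey 0 1 le_rfl zero_le_one le_rfl hex
  have hW1 : w 1 = u := by
    show v + (1:ℝ) • m = u
    rw [one_smul, hm]; abel
  have hW0 : w 0 = v := by simp [hwdef]
  have hf1 : f 1 = P ‖u‖ * ⟪u, m⟫ := by simp [hfdef, hndef, hφdef, hW1]
  have hf0 : f 0 = P ‖v‖ * ⟪v, m⟫ := by simp [hfdef, hndef, hφdef, hW0]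
  have hRHS : (⟪P ‖u‖ • u - P ‖v‖ • v, m⟫ : ℝ) = f 1 - f 0 := by
    rw [inner_sub_left, real_inner_smul_left, real_inner_smul_left, hf1, hf0]
  have hLHS : (∫ s in (0:ℝ)..1, P ‖s • u + (1 - s) • v‖) * c ^ 2
      = ∫ s in (0:ℝ)..1, g s := by
    rw [← intervalIntegral.integral_mul_const]
    apply intervalIntegral.integral_congr
    intro s _
    simp only [hgdef, hndef]
    rw [hw s]
  rw [hRHS, hLHS]
  exact hsplit

/-- Embedding of `3×3` matrices into Euclidean space. -/
noncomputable def matE (A : Matrix (Fin 3) (Fin 3) ℝ) : EuclideanSpace ℝ (Fin 3 × Fin 3) :=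
  (WithLp.equiv 2 _).symm (fun p => A p.1 p.2)

lemma fip_eq (A B : Matrix (Fin 3) (Fin 3) ℝ) : fip A B = ⟪matE A, matE B⟫ := by
  simp only [fip, matE, PiLp.inner_apply, RCLike.inner_apply, conj_trivial]
  rw [Fintype.sum_prod_type]
  simp [mul_comm]

lemma fnorm_eq (A : Matrix (Fin 3) (Fin 3) ℝ) : fnorm A = ‖matE A‖ := by
  rw [fnorm, fip_eq, norm_eq_sqrt_real_inner]

lemma matE_smul (r : ℝ) (A : Matrix (Fin 3) (Fin 3) ℝ) : matE (r • A) = r • matE A := rfl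

lemma matE_add (A B : Matrix (Fin 3) (Fin 3) ℝ) : matE (A + B) = matE A + matE B := rfl

lemma matE_sub (A B : Matrix (Fin 3) (Fin 3) ℝ) : matE (A - B) = matE A - matE B := rfl

/-- (Generalized DiBenedetto lemma.) If `P : [0, ∞) → [0, ∞)` is differentiable on
`(0, ∞)` with `P' ≥ 0`, then for all `3×3` real matrices `U`, `V`,
`(P(|U|)U − P(|V|)V) : (U − V) ≥ (∫₀¹ P(|sU + (1−s)V|) ds) · |U − V|²`. -/
theorem stmt8 (P : ℝ → ℝ)
    (hP0 : ∀ z : ℝ, 0 ≤ z → 0 ≤ P z)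
    (hPdiff : ∀ z : ℝ, 0 < z → DifferentiableAt ℝ P z)
    (hP' : ∀ z : ℝ, 0 < z → 0 ≤ deriv P z)
    (U V : Matrix (Fin 3) (Fin 3) ℝ) :
    (∫ s in (0:ℝ)..1, P (fnorm (s • U + (1 - s) • V))) * fnorm (U - V) ^ 2 ≤
      fip (P (fnorm U) • U - P (fnorm V) • V) (U - V) := by
  have h := key_ips P hP0 hPdiff hP' (matE U) (matE V)
  have e1 : ∀ s : ℝ, fnorm (s • U + (1 - s) • V) = ‖s • matE U + (1 - s) • matE V‖ := by
    intro s
    rw [fnorm_eq, matE_add, matE_smul, matE_smul]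
  have e2 : fnorm (U - V) = ‖matE U - matE V‖ := by rw [fnorm_eq, matE_sub]
  have e3 : fip (P (fnorm U) • U - P (fnorm V) • V) (U - V)
      = ⟪P ‖matE U‖ • matE U - P ‖matE V‖ • matE V, matE U - matE V⟫ := by
    rw [fip_eq, matE_sub, matE_sub, matE_smul, matE_smul, fnorm_eq, fnorm_eq]
  rw [e2, e3]
  calc (∫ s in (0:ℝ)..1, P (fnorm (s • U + (1 - s) • V))) * ‖matE U - matE V‖ ^ 2
      = (∫ s in (0:ℝ)..1, P ‖s • matE U + (1 - s) • matE V‖) * ‖matE U - matE V‖ ^ 2 := by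
        congr 1
        apply intervalIntegral.integral_congr
        intro s _
        simp only [e1]
    _ ≤ _ := h
end

section
/- Let c > 0, α > 0, and let P : [0, ∞) → [0, ∞) satisfy P(z) ≥ c z^α for all z ≥ 0 and be nondecreasing (P' ≥ 0). Then for all 3×3 real matrices U and V with |U| ≥ |U − V|, one has (P(|U|)U − P(|V|)V) : (U − V) ≥ (c/(α+1)) |U − V|^{2+α}, where P is also assumed differentiable on (0, ∞). -/
lemma fip_smul_left (r : ℝ) (A B : Matrix (Fin 3) (Fin 3) ℝ) : fip (r • A) B = r * fip A B := by
  simp [fip, Finset.mul_sum, mul_assoc]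

lemma fip_sub_left (A B C : Matrix (Fin 3) (Fin 3) ℝ) : fip (A - B) C = fip A C - fip B C := by
  simp [fip, sub_mul, Finset.sum_sub_distrib]

lemma fip_nonneg (A : Matrix (Fin 3) (Fin 3) ℝ) : 0 ≤ fip A A :=
  Finset.sum_nonneg fun _ _ => Finset.sum_nonneg fun _ _ => mul_self_nonneg _

lemma fip_zero_right (A : Matrix (Fin 3) (Fin 3) ℝ) : fip A 0 = 0 := by simp [fip]

lemma fip_self_eq_zero {A : Matrix (Fin 3) (Fin 3) ℝ} (h : fip A A = 0) : A = 0 := by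
  ext i j
  have h1 := (Finset.sum_eq_zero_iff_of_nonneg (fun i _ => Finset.sum_nonneg
    fun j _ => mul_self_nonneg (A i j))).1 h i (Finset.mem_univ i)
  have h2 := (Finset.sum_eq_zero_iff_of_nonneg (fun j _ => mul_self_nonneg (A i j))).1 h1 j
    (Finset.mem_univ j)
  have := mul_self_eq_zero.1 h2
  simpa using this

lemma fip_add_right (A V W : Matrix (Fin 3) (Fin 3) ℝ) : fip A (V + W) = fip A V + fip A W := by
  simp [fip, Matrix.add_apply, mul_add, Finset.sum_add_distrib]

lemma fip_comm (A B : Matrix (Fin 3) (Fin 3) ℝ) : fip A B = fip B A := by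
  simp [fip, mul_comm]

lemma fip_expand (V W : Matrix (Fin 3) (Fin 3) ℝ) :
    fip (V + W) (V + W) = fip V V + 2 * fip V W + fip W W := by
  rw [fip_add_right, fip_comm (V + W) V, fip_comm (V + W) W, fip_add_right, fip_add_right,
    fip_comm W V]
  ring

lemma fip_add_left (V W A : Matrix (Fin 3) (Fin 3) ℝ) : fip (V + W) A = fip V A + fip W A := by
  rw [fip_comm, fip_add_right, fip_comm A V, fip_comm A W]

/-- If `P : [0, ∞) → [0, ∞)` is differentiable on `(0, ∞)` with `P' ≥ 0` and satisfies
`P(z) ≥ c z^α` for all `z ≥ 0` (with `c > 0`, `α > 0`), then for all `3×3` real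
matrices `U`, `V` with `|U| ≥ |U − V|`,
`(P(|U|)U − P(|V|)V) : (U − V) ≥ (c/(α+1)) |U − V|^{2+α}`. -/
theorem stmt10 (c α : ℝ) (hc : 0 < c) (hα : 0 < α) (P : ℝ → ℝ)
    (hP0 : ∀ z : ℝ, 0 ≤ z → 0 ≤ P z)
    (hPlow : ∀ z : ℝ, 0 ≤ z → c * z ^ α ≤ P z)
    (hPdiff : ∀ z : ℝ, 0 < z → DifferentiableAt ℝ P z)
    (hP' : ∀ z : ℝ, 0 < z → 0 ≤ deriv P z)
    (U V : Matrix (Fin 3) (Fin 3) ℝ)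
    (hUV : fnorm (U - V) ≤ fnorm U) :
    c / (α + 1) * fnorm (U - V) ^ (2 + α) ≤
      fip (P (fnorm U) • U - P (fnorm V) • V) (U - V) := by
  set W : Matrix (Fin 3) (Fin 3) ℝ := U - V with hWdef
  have hU : U = V + W := by rw [hWdef]; abel
  set w : ℝ := fip W W with hwdef
  set v : ℝ := fip V V with hvdef
  set s : ℝ := fip V W with hsdef
  have hwnn : 0 ≤ w := fip_nonneg W
  have hvnn : 0 ≤ v := fip_nonneg V
  have hα1 : (0:ℝ) < α + 1 := by linarith
  -- trivial case W = 0
  rcases eq_or_lt_of_le hwnn with hw0 | hw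
  · have hWz : W = 0 := fip_self_eq_zero hw0.symm
    rw [hWz, fip_zero_right]
    have : fnorm (0 : Matrix (Fin 3) (Fin 3) ℝ) = 0 := by
      simp [fnorm, fip]
    rw [this, Real.zero_rpow (by positivity), mul_zero]
  -- scalar data
  have hUU : fip U U = v + 2 * s + w := by rw [hU, fip_expand]
  have hUW : fip U W = s + w := by rw [hU, fip_add_left]
  have hsqw : (0:ℝ) < Real.sqrt w := Real.sqrt_pos.2 hw
  have hKey : c / (α + 1) * fnorm W ^ (2 + α) = c * Real.sqrt w ^ α * w / (α + 1) := by
    have h1 : fnorm W = Real.sqrt w := rfl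
    rw [h1, Real.rpow_add hsqw, show ((2:ℝ)) = ((2:ℕ):ℝ) by norm_num, Real.rpow_natCast,
      Real.sq_sqrt hwnn]
    ring
  -- case V = 0
  rcases eq_or_lt_of_le hvnn with hv0 | hv
  · have hVz : V = 0 := fip_self_eq_zero hv0.symm
    have hUW' : U = W := by rw [hU, hVz, zero_add]
    have hs0 : s = 0 := by rw [hsdef, hVz, fip_comm, fip_zero_right]
    have hfipVW : fip V W = 0 := hsdef ▸ hs0
    have hfnU : fnorm U = Real.sqrt w := by rw [fnorm, hUU, hs0, hv0.symm]; norm_num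
    rw [fip_sub_left, fip_smul_left, fip_smul_left, hfipVW, mul_zero, sub_zero, hKey, hUW',
      ← hwdef, show fnorm W = Real.sqrt w from rfl]
    have hPl := hPlow (Real.sqrt w) hsqw.le
    calc c * Real.sqrt w ^ α * w / (α + 1) ≤ c * Real.sqrt w ^ α * w := by
          apply div_le_self (by positivity); linarith
      _ ≤ P (Real.sqrt w) * w := mul_le_mul_of_nonneg_right hPl hwnn
  -- main case: v > 0, w > 0
  have hv2s : 0 ≤ v + 2 * s := by
    have h2 : Real.sqrt w ^ 2 ≤ Real.sqrt (fip U U) ^ 2 :=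
      pow_le_pow_left₀ (Real.sqrt_nonneg _) hUV 2
    rw [Real.sq_sqrt hwnn, Real.sq_sqrt (fip_nonneg U), hUU] at h2
    linarith
  set φ : ℝ → ℝ := fun t => v + 2 * t * s + t ^ 2 * w with hphidef
  have hφpos : ∀ t ∈ Set.Icc (0:ℝ) 1, 0 < φ t := by
    intro t ht
    obtain ⟨ht0, ht1⟩ := ht
    rcases eq_or_lt_of_le ht0 with h0 | h0
    · simp only [hphidef, ← h0]; norm_num; exact hv
    · have h1 : 0 ≤ t * (v + 2 * s) := mul_nonneg ht0 hv2s
      have h2 : 0 < t ^ 2 * w := by positivity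
      have h3 : 0 ≤ (1 - t) * v := mul_nonneg (by linarith) hv.le
      simp only [hphidef]
      nlinarith
  have hφlb : ∀ t ∈ Set.Icc (0:ℝ) 1, t ^ 2 * w ≤ φ t := by
    intro t ht
    obtain ⟨ht0, ht1⟩ := ht
    have h1 : 0 ≤ t * (v + 2 * s) := mul_nonneg ht0 hv2s
    have h3 : 0 ≤ (1 - t) * v := mul_nonneg (by linarith) hv.le
    simp only [hphidef]
    nlinarith
  set K : ℝ := c * Real.sqrt w ^ α * w with hKdef
  set f : ℝ → ℝ := fun t => P (Real.sqrt (φ t)) * (s + t * w) with hfdef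
  set F : ℝ → ℝ := fun t => f t - K / (α + 1) * t ^ (α + 1) with hFdef
  have hder : ∀ t ∈ Set.Icc (0:ℝ) 1, HasDerivAt F
      (deriv P (Real.sqrt (φ t)) * (1 / (2 * Real.sqrt (φ t)) * (2 * s + 2 * t * w)) * (s + t * w)
        + P (Real.sqrt (φ t)) * w - K * t ^ α) t := by
    intro t ht
    have hφt := hφpos t ht
    have hφd : HasDerivAt φ (2 * s + 2 * t * w) t := by
      have h1 : HasDerivAt φ (2 * 1 * s + (2:ℕ) * t ^ (2 - 1) * w) t :=
        ((((hasDerivAt_id t).const_mul 2).mul_const s).const_add v).add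
          ((hasDerivAt_pow 2 t).mul_const w)
      convert h1 using 1
      push_cast
      ring
    have hsq : HasDerivAt (fun x => Real.sqrt (φ x))
        (1 / (2 * Real.sqrt (φ t)) * (2 * s + 2 * t * w)) t :=
      (Real.hasDerivAt_sqrt hφt.ne').comp t hφd
    have hPh : HasDerivAt (fun x => P (Real.sqrt (φ x)))
        (deriv P (Real.sqrt (φ t)) * (1 / (2 * Real.sqrt (φ t)) * (2 * s + 2 * t * w))) t :=
      ((hPdiff _ (Real.sqrt_pos.2 hφt)).hasDerivAt).comp t hsq
    have hq : HasDerivAt (fun x : ℝ => s + x * w) (1 * w) t :=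
      ((hasDerivAt_id t).mul_const w).const_add s
    have hfd : HasDerivAt f
        (deriv P (Real.sqrt (φ t)) * (1 / (2 * Real.sqrt (φ t)) * (2 * s + 2 * t * w)) * (s + t * w)
          + P (Real.sqrt (φ t)) * (1 * w)) t := hPh.mul hq
    have hr : HasDerivAt (fun x : ℝ => x ^ (α + 1)) ((α + 1) * t ^ (α + 1 - 1)) t :=
      Real.hasDerivAt_rpow_const (Or.inr (by linarith))
    have hFd := hfd.sub (hr.const_mul (K / (α + 1)))
    convert hFd using 1
    · rfl
    · rfl
    · rfl
    rw [show α + 1 - 1 = α by ring]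
    field_simp
  have hmono : MonotoneOn F (Set.Icc 0 1) := by
    apply monotoneOn_of_deriv_nonneg (convex_Icc 0 1)
    · intro t ht
      exact (hder t ht).continuousAt.continuousWithinAt
    · intro t ht
      rw [interior_Icc] at ht
      exact ((hder t (Set.mem_Icc_of_Ioo ht)).differentiableAt).differentiableWithinAt
    · intro t ht
      rw [interior_Icc] at ht
      rw [(hder t (Set.mem_Icc_of_Ioo ht)).deriv]
      have hφt := hφpos t (Set.mem_Icc_of_Ioo ht)
      have hsqφ : 0 < Real.sqrt (φ t) := Real.sqrt_pos.2 hφt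
      have h0t : 0 ≤ t := ht.1.le
      have hA : 0 ≤ deriv P (Real.sqrt (φ t)) *
          (1 / (2 * Real.sqrt (φ t)) * (2 * s + 2 * t * w)) * (s + t * w) := by
        have he : deriv P (Real.sqrt (φ t)) *
            (1 / (2 * Real.sqrt (φ t)) * (2 * s + 2 * t * w)) * (s + t * w)
            = deriv P (Real.sqrt (φ t)) * (s + t * w) ^ 2 / Real.sqrt (φ t) := by
          field_simp
        rw [he]
        have hdP := hP' _ hsqφ
        positivity
      have hB : K * t ^ α ≤ P (Real.sqrt (φ t)) * w := by
        have hlb : t * Real.sqrt w ≤ Real.sqrt (φ t) := by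
          have h1 : Real.sqrt (t ^ 2 * w) ≤ Real.sqrt (φ t) :=
            Real.sqrt_le_sqrt (hφlb t (Set.mem_Icc_of_Ioo ht))
          rwa [Real.sqrt_mul (sq_nonneg t), Real.sqrt_sq h0t] at h1
        have h2 : (t * Real.sqrt w) ^ α ≤ Real.sqrt (φ t) ^ α :=
          Real.rpow_le_rpow (by positivity) hlb hα.le
        have h3 : c * Real.sqrt (φ t) ^ α ≤ P (Real.sqrt (φ t)) := hPlow _ (Real.sqrt_nonneg _)
        have h4 : (t * Real.sqrt w) ^ α = t ^ α * Real.sqrt w ^ α :=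
          Real.mul_rpow h0t (Real.sqrt_nonneg _)
        calc K * t ^ α = c * (t ^ α * Real.sqrt w ^ α) * w := by rw [hKdef]; ring
          _ = c * (t * Real.sqrt w) ^ α * w := by rw [h4]
          _ ≤ c * Real.sqrt (φ t) ^ α * w := by
              exact mul_le_mul_of_nonneg_right (mul_le_mul_of_nonneg_left h2 hc.le) hwnn
          _ ≤ P (Real.sqrt (φ t)) * w := mul_le_mul_of_nonneg_right h3 hwnn
      linarith
  have hFmono := hmono (Set.left_mem_Icc.2 zero_le_one) (Set.right_mem_Icc.2 zero_le_one)
    zero_le_one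
  have hF0 : F 0 = f 0 := by
    rw [hFdef]
    simp [Real.zero_rpow (show α + 1 ≠ 0 by positivity)]
  have hF1 : F 1 = f 1 - K / (α + 1) := by
    rw [hFdef]
    simp [Real.one_rpow]
  have hf0 : f 0 = P (Real.sqrt v) * s := by
    rw [hfdef]
    norm_num [hphidef]
  have hf1 : f 1 = P (Real.sqrt (v + 2 * s + w)) * (s + w) := by
    rw [hfdef]
    norm_num [hphidef]
  have hfnU : fnorm U = Real.sqrt (v + 2 * s + w) := by rw [fnorm, hUU]
  have hfnV : fnorm V = Real.sqrt v := rfl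
  rw [fip_sub_left, fip_smul_left, fip_smul_left, hKey, hfnU, hfnV, hUW, ← hsdef]
  have hfin : K / (α + 1) ≤ f 1 - f 0 := by
    rw [hF0, hF1] at hFmono
    linarith
  rw [hf0, hf1] at hfin
  linarith
end
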